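/- Let f(e,t) = (3I₂ + √(9-β)S(t))/(2(1+e cos t)) for 0 < β ≤ 9, 0 ≤ e < 1, t ∈ [-π,π]. Then for every x and every t, |⟨f(e,t)x, x⟩| ≤ (2-e)·|⟨f(1,t)x, x⟩|, where f(1,t) uses denominator 2(1+cos t). Consequently, for x in the form domain D̂(β) (where ∫ ⟨f(1,t)x(t),x(t)⟩ dt < ∞), the quadratic forms Γ(β,e)(x) converge to Γ(β,1)(x) as e → 1, by dominated convergence. -/

import Mathlib

open Matrix Real MeasureTheory intervalIntegral Filter

/-- The symmetric matrix S(t). -/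
noncomputable def Smat (t : ℝ) : Matrix (Fin 2) (Fin 2) ℝ :=
  !![cos (2 * t), sin (2 * t); sin (2 * t), -cos (2 * t)]

/-- Quadratic potential term ⟨(3I₂ + √(9-β)S(t))v, v⟩. -/
noncomputable def qform (β t : ℝ) (v : Fin 2 → ℝ) : ℝ :=
  (((3 : ℝ) • (1 : Matrix (Fin 2) (Fin 2) ℝ) + Real.sqrt (9 - β) • Smat t).mulVec v) ⬝ᵥ v

/-- The quadratic form Γ(β,e)(x) on [-π,π]. -/
noncomputable def Gamma (β : ℝ) (x : ℝ → Fin 2 → ℝ) (e : ℝ) : ℝ :=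
  ∫ t in (-Real.pi)..Real.pi,
    (‖deriv x t‖ ^ 2 - ‖x t‖ ^ 2 + qform β t (x t) / (2 * (1 + e * cos t)))

lemma qform_nonneg (β t : ℝ) (hβ : 0 ≤ β) (v : Fin 2 → ℝ) : 0 ≤ qform β t v := by
  have hs0 : 0 ≤ Real.sqrt (9 - β) := Real.sqrt_nonneg _
  have hs3 : Real.sqrt (9 - β) ≤ 3 := by
    rw [show (3:ℝ) = Real.sqrt 9 by rw [show (9:ℝ) = 3^2 by norm_num, Real.sqrt_sq (by norm_num)]]
    exact Real.sqrt_le_sqrt (by linarith)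
  have h1 : Real.cos (2*t) = Real.cos t ^ 2 - Real.sin t ^ 2 := by
    rw [Real.cos_two_mul]; nlinarith [Real.sin_sq_add_cos_sq t]
  have h2 : Real.sin (2*t) = 2 * Real.sin t * Real.cos t := Real.sin_two_mul t
  simp only [qform, Smat, Matrix.add_mulVec, Matrix.smul_mulVec, Matrix.one_mulVec,
    Matrix.mulVec, dotProduct, Fin.sum_univ_two, Matrix.cons_val', Matrix.cons_val_zero,
    Matrix.cons_val_one, Matrix.head_cons, Matrix.head_fin_const, Pi.add_apply, Pi.smul_apply,
    smul_eq_mul, Matrix.empty_val', Matrix.cons_val_fin_one, Matrix.add_apply, Matrix.smul_apply,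
    Matrix.one_fin_two, Matrix.of_apply]
  rw [h1, h2]
  nlinarith [Real.sin_sq_add_cos_sq t, sq_nonneg (v 0), sq_nonneg (v 1),
    mul_nonneg (by linarith : (0:ℝ) ≤ 3 + Real.sqrt (9-β)) (sq_nonneg (v 0 * Real.cos t + v 1 * Real.sin t)),
    mul_nonneg (by linarith : (0:ℝ) ≤ 3 - Real.sqrt (9-β)) (sq_nonneg (v 0 * Real.sin t - v 1 * Real.cos t))]

lemma one_add_cos_pos {t : ℝ} (h1 : -Real.pi < t) (h2 : t < Real.pi) : 0 < 1 + Real.cos t := by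
  have hc : 0 < Real.cos (t / 2) :=
    Real.cos_pos_of_mem_Ioo ⟨by linarith, by linarith⟩
  have h := Real.cos_sq (t/2)
  rw [show 2*(t/2) = t by ring] at h
  nlinarith

lemma dom_ineq (β : ℝ) (hβ0 : 0 < β) (hβ9 : β ≤ 9) :
    ∀ e : ℝ, 0 ≤ e → e < 1 → ∀ t : ℝ, -Real.pi < t → t < Real.pi → ∀ v : Fin 2 → ℝ,
      |qform β t v / (2 * (1 + e * cos t))| ≤ (2 - e) * |qform β t v / (2 * (1 + cos t))| := by
  intro e he0 he1 t ht1 ht2 v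
  have hq : 0 ≤ qform β t v := qform_nonneg β t hβ0.le v
  have hc1 : -1 ≤ Real.cos t := Real.neg_one_le_cos t
  have hc2 : Real.cos t ≤ 1 := Real.cos_le_one t
  have hB : 0 < 1 + Real.cos t := one_add_cos_pos ht1 ht2
  have hA : 0 < 1 + e * Real.cos t := by nlinarith
  rw [abs_of_nonneg (div_nonneg hq (by linarith)), abs_of_nonneg (div_nonneg hq (by linarith)),
    mul_div_assoc', div_le_div_iff₀ (by linarith) (by linarith)]
  nlinarith [mul_nonneg hq (mul_nonneg (by linarith : (0:ℝ) ≤ 1 - e)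
    (by nlinarith : (0:ℝ) ≤ 1 - Real.cos t * (1 - e)))]

/-- Pointwise domination |⟨f(e,t)v,v⟩| ≤ (2-e)|⟨f(1,t)v,v⟩|, and the resulting
convergence Γ(β,e)(x) → Γ(β,1)(x) as e → 1⁻ for x in the form domain. -/
theorem quadratic_form_limit (β : ℝ) (hβ0 : 0 < β) (hβ9 : β ≤ 9) :
    (∀ e : ℝ, 0 ≤ e → e < 1 → ∀ t : ℝ, -Real.pi < t → t < Real.pi → ∀ v : Fin 2 → ℝ,
      |qform β t v / (2 * (1 + e * cos t))| ≤ (2 - e) * |qform β t v / (2 * (1 + cos t))|) ∧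
    (∀ x : ℝ → Fin 2 → ℝ,
      IntervalIntegrable (fun t => ‖deriv x t‖ ^ 2 - ‖x t‖ ^ 2) volume (-Real.pi) Real.pi →
      IntervalIntegrable (fun t => qform β t (x t) / (2 * (1 + cos t))) volume (-Real.pi) Real.pi →
      Tendsto (Gamma β x) (nhdsWithin 1 (Set.Iio 1)) (nhds (Gamma β x 1))) := by
  refine ⟨dom_ineq β hβ0 hβ9, ?_⟩
  intro x hg hq1
  have hpi0 := Real.pi_pos
  have hpi : (-Real.pi) ≤ Real.pi := by linarith
  set q : ℝ → ℝ := fun t => qform β t (x t) with hqdef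
  have hq1' : IntegrableOn (fun t => q t / (2*(1+cos t))) (Set.Ioc (-Real.pi) Real.pi) volume := by
    rwa [intervalIntegrable_iff_integrableOn_Ioc_of_le hpi] at hq1
  have hae : ∀ᵐ t ∂(volume.restrict (Set.Ioc (-Real.pi) Real.pi)), t ∈ Set.Ioo (-Real.pi) Real.pi := by
    have h1 : ∀ᵐ t ∂(volume.restrict (Set.Ioc (-Real.pi) Real.pi)), t ∈ Set.Ioc (-Real.pi) Real.pi :=
      ae_restrict_mem measurableSet_Ioc
    have h2 : ∀ᵐ t : ℝ, t ≠ Real.pi := by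
      rw [ae_iff]
      simpa using measure_singleton (μ := (volume : Measure ℝ)) Real.pi
    filter_upwards [h1, ae_restrict_of_ae h2] with t ht hne
    exact ⟨ht.1, lt_of_le_of_ne ht.2 hne⟩
  -- integrability for each e ∈ [0,1)
  have hintE : ∀ e : ℝ, 0 ≤ e → e < 1 →
      IntegrableOn (fun t => q t / (2*(1+e*cos t))) (Set.Ioc (-Real.pi) Real.pi) volume := by
    intro e he0 he1
    have hApos : ∀ t : ℝ, 0 < 1 + e * cos t := by
      intro t
      nlinarith [Real.neg_one_le_cos t, Real.cos_le_one t]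
    have hcont : Continuous fun t : ℝ => (1 + cos t) / (1 + e * cos t) := by
      exact Continuous.div (continuous_const.add Real.continuous_cos)
        (continuous_const.add (continuous_const.mul Real.continuous_cos)) (fun t => (hApos t).ne')
    have hbd : ∀ t : ℝ, ‖(1 + cos t)/(1 + e*cos t)‖ ≤ 2 := by
      intro t
      have h1 := Real.neg_one_le_cos t; have h2 := Real.cos_le_one t
      rw [Real.norm_eq_abs, abs_of_nonneg (div_nonneg (by nlinarith) (hApos t).le),
        div_le_iff₀ (hApos t)]
      nlinarith
    have hmul : IntegrableOn
        (fun t => ((1 + cos t)/(1 + e*cos t)) * (q t / (2*(1+cos t))))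
        (Set.Ioc (-Real.pi) Real.pi) volume :=
      hq1'.bdd_mul (hcont.aestronglyMeasurable.restrict) (ae_of_all _ hbd)
    refine hmul.congr ?_
    filter_upwards [hae] with t ht
    have hB := one_add_cos_pos ht.1 ht.2
    field_simp [hB.ne', (hApos t).ne']
  have hIoo : Set.Ioo (0:ℝ) 1 ∈ nhdsWithin (1:ℝ) (Set.Iio 1) :=
    Ioo_mem_nhdsLT_of_mem (Set.mem_Ioc.2 ⟨by norm_num, le_refl (1:ℝ)⟩)
  -- dominated convergence
  have hDCT : Tendsto (fun e => ∫ t in Set.Ioc (-Real.pi) Real.pi, q t / (2*(1+e*cos t)))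
      (nhdsWithin 1 (Set.Iio 1))
      (nhds (∫ t in Set.Ioc (-Real.pi) Real.pi, q t / (2*(1+cos t)))) := by
    apply MeasureTheory.tendsto_integral_filter_of_dominated_convergence (fun t => 2 * |q t / (2*(1+cos t))|)
    · filter_upwards [hIoo] with e he
      exact (hintE e he.1.le he.2).aestronglyMeasurable
    · filter_upwards [hIoo] with e he
      filter_upwards [hae] with t ht
      rw [Real.norm_eq_abs]
      calc |q t / (2*(1+e*cos t))| ≤ (2 - e) * |q t / (2*(1+cos t))| :=
            dom_ineq β hβ0 hβ9 e he.1.le he.2 t ht.1 ht.2 (x t)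
        _ ≤ 2 * |q t / (2*(1+cos t))| := by
            have := abs_nonneg (q t / (2*(1+cos t)))
            nlinarith [he.1]
    · exact hq1'.abs.const_mul 2
    · filter_upwards [hae] with t ht
      have hB := one_add_cos_pos ht.1 ht.2
      have hca : ContinuousAt (fun e : ℝ => q t / (2*(1+e*cos t))) 1 := by
        apply ContinuousAt.div continuousAt_const (by fun_prop)
        exact ne_of_gt (by nlinarith)
      have h2 := hca.tendsto.mono_left (nhdsWithin_le_nhds (s := Set.Iio (1:ℝ)))
      simpa using h2
  -- identify Gamma
  have hC := hg
  have hGe : ∀ᶠ e in nhdsWithin (1:ℝ) (Set.Iio 1), _root_.Gamma β x e =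
      (∫ t in Set.Ioc (-Real.pi) Real.pi, (‖deriv x t‖ ^ 2 - ‖x t‖ ^ 2)) +
      ∫ t in Set.Ioc (-Real.pi) Real.pi, q t / (2*(1+e*cos t)) := by
    filter_upwards [hIoo] with e he
    have hie : IntervalIntegrable (fun t => q t / (2*(1+e*cos t))) volume (-Real.pi) Real.pi := by
      rw [intervalIntegrable_iff_integrableOn_Ioc_of_le hpi]; exact hintE e he.1.le he.2
    rw [show _root_.Gamma β x e = ∫ t in (-Real.pi)..Real.pi,
        ((‖deriv x t‖ ^ 2 - ‖x t‖ ^ 2) + q t / (2*(1+e*cos t))) from rfl,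
      intervalIntegral.integral_add hg hie, intervalIntegral.integral_of_le hpi,
      intervalIntegral.integral_of_le hpi]
  have hG1 : _root_.Gamma β x 1 =
      (∫ t in Set.Ioc (-Real.pi) Real.pi, (‖deriv x t‖ ^ 2 - ‖x t‖ ^ 2)) +
      ∫ t in Set.Ioc (-Real.pi) Real.pi, q t / (2*(1+cos t)) := by
    rw [show _root_.Gamma β x 1 = ∫ t in (-Real.pi)..Real.pi,
        ((‖deriv x t‖ ^ 2 - ‖x t‖ ^ 2) + q t / (2*(1+cos t))) by simp only [_root_.Gamma, one_mul, hqdef],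
      intervalIntegral.integral_add hg hq1, intervalIntegral.integral_of_le hpi,
      intervalIntegral.integral_of_le hpi]
  rw [hG1]
  exact (tendsto_const_nhds.add hDCT).congr' (hGe.mono fun e h => h.symm)
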